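/- For the LTI system x⁺ = Ax + Bu, y = Cx, any input-output trajectory of the form (u, y) with y_k = C A^k x_0 + Σ_{j<k} C A^{k−1−j} B u_j lies in the column span of the stacked Hankel matrices built from any other trajectory generated this way, provided the data trajectory's state-input Hankel matrix has full row rank. Concretely: if (û, ŷ) is generated from initial state x̂_0 and the matrix [H_L(û); X̂] has full row rank (where X̂ collects the states x̂_0,…,x̂_{d−L}), then for every length-L trajectory (u, y) of the system there exists ν with [H_L(û); H_L(ŷ)] ν = [u; y]. -/
import Mathlib

theorem stmt_7 (n mi p d L : ℕ) (hL : 1 ≤ L) (hLd : L ≤ d)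
    (A : Matrix (Fin n) (Fin n) ℝ) (B : Matrix (Fin n) (Fin mi) ℝ)
    (C : Matrix (Fin p) (Fin n) ℝ)
    (uhat : ℕ → Fin mi → ℝ) (xhat : ℕ → Fin n → ℝ) (yhat : ℕ → Fin p → ℝ)
    (hxhat : ∀ k, xhat (k + 1) = A.mulVec (xhat k) + B.mulVec (uhat k))
    (hyhat : ∀ k, yhat k = C.mulVec (xhat k))
    (hrank :
      (Matrix.of fun (r : Fin L × Fin mi ⊕ Fin n) (j : Fin (d - L + 1)) =>
          Sum.elim (fun im => uhat ((im.1 : ℕ) + (j : ℕ)) im.2)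
            (fun i => xhat (j : ℕ) i) r).rank = L * mi + n) :
    ∀ (u : ℕ → Fin mi → ℝ) (x : ℕ → Fin n → ℝ) (y : ℕ → Fin p → ℝ),
      (∀ k, x (k + 1) = A.mulVec (x k) + B.mulVec (u k)) →
      (∀ k, y k = C.mulVec (x k)) →
      ∃ ν : Fin (d - L + 1) → ℝ,
        (∀ (i : Fin L) (km : Fin mi), ∑ j : Fin (d - L + 1), uhat ((i : ℕ) + (j : ℕ)) km * ν j = u i km) ∧
        (∀ (i : Fin L) (kp : Fin p), ∑ j : Fin (d - L + 1), yhat ((i : ℕ) + (j : ℕ)) kp * ν j = y i kp) := by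
  intro u x y hx hy
  set M : Matrix (Fin L × Fin mi ⊕ Fin n) (Fin (d - L + 1)) ℝ :=
    Matrix.of fun (r : Fin L × Fin mi ⊕ Fin n) (j : Fin (d - L + 1)) =>
      Sum.elim (fun im => uhat ((im.1 : ℕ) + (j : ℕ)) im.2)
        (fun i => xhat (j : ℕ) i) r with hM
  have hsurj : Function.Surjective M.mulVec := by
    have h1 : LinearMap.range M.mulVecLin = ⊤ := by
      apply Submodule.eq_top_of_finrank_eq
      have : Module.finrank ℝ ((Fin L × Fin mi ⊕ Fin n) → ℝ)
          = L * mi + n := by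
        simp [Module.finrank_fintype_fun_eq_card, Fintype.card_sum, Fintype.card_prod]
      rw [this]
      exact hrank
    intro v
    have hv : v ∈ LinearMap.range M.mulVecLin := h1 ▸ Submodule.mem_top
    obtain ⟨ν, hν⟩ := hv
    exact ⟨ν, hν⟩
  obtain ⟨ν, hν⟩ := hsurj (Sum.elim (fun im : Fin L × Fin mi => u im.1 im.2) (fun i => x 0 i))
  have hu' : ∀ (k : ℕ), k < L → ∀ (km : Fin mi),
      ∑ j : Fin (d - L + 1), uhat (k + (j : ℕ)) km * ν j = u k km := by
    intro k hk km
    have := congrFun hν (Sum.inl (⟨k, hk⟩, km))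
    simpa [hM, Matrix.mulVec, dotProduct] using this
  have hx0 : ∀ (i : Fin n), ∑ j : Fin (d - L + 1), xhat (j : ℕ) i * ν j = x 0 i := by
    intro i
    have := congrFun hν (Sum.inr i)
    simpa [hM, Matrix.mulVec, dotProduct] using this
  set z : ℕ → Fin n → ℝ := fun k i => ∑ j : Fin (d - L + 1), xhat (k + (j : ℕ)) i * ν j with hzdef
  have hz0 : z 0 = x 0 := by
    funext i
    simpa [hzdef] using hx0 i
  have hzstep : ∀ k, k < L → z (k + 1) = A.mulVec (z k) + B.mulVec (u k) := by
    intro k hk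
    funext i
    have key : ∀ j : Fin (d - L + 1),
        xhat (k + 1 + (j : ℕ)) i = A.mulVec (xhat (k + (j : ℕ))) i + B.mulVec (uhat (k + (j : ℕ))) i := by
      intro j
      have : k + 1 + (j : ℕ) = (k + (j : ℕ)) + 1 := by ring
      rw [this, hxhat]
      rfl
    have hA : A.mulVec (z k) i = ∑ j : Fin (d - L + 1), A.mulVec (xhat (k + (j : ℕ))) i * ν j := by
      simp only [Matrix.mulVec, dotProduct, hzdef, Finset.mul_sum, Finset.sum_mul]
      rw [Finset.sum_comm]
      exact Finset.sum_congr rfl fun j _ => Finset.sum_congr rfl fun l _ => by ring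
    have hB : B.mulVec (u k) i = ∑ j : Fin (d - L + 1), B.mulVec (uhat (k + (j : ℕ))) i * ν j := by
      simp only [Matrix.mulVec, dotProduct]
      simp only [← hu' k hk, Finset.mul_sum, Finset.sum_mul]
      rw [Finset.sum_comm]
      exact Finset.sum_congr rfl fun j _ => Finset.sum_congr rfl fun l _ => by ring
    show z (k + 1) i = A.mulVec (z k) i + B.mulVec (u k) i
    rw [hA, hB, ← Finset.sum_add_distrib]
    simp only [hzdef]
    congr 1
    funext j
    rw [key j, add_mul]
  have hzx : ∀ k, k < L → z k = x k := by
    intro k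
    induction k with
    | zero => intro _; exact hz0
    | succ k ih =>
      intro hk
      have hk' : k < L := Nat.lt_of_succ_lt hk
      rw [hzstep k hk', ih hk', hx k]
  refine ⟨ν, ?_, ?_⟩
  · intro i km; exact hu' i i.isLt km
  · intro i kp
    have : ∑ j : Fin (d - L + 1), yhat ((i : ℕ) + (j : ℕ)) kp * ν j
        = C.mulVec (z (i : ℕ)) kp := by
      simp only [hyhat, Matrix.mulVec, dotProduct, hzdef, Finset.mul_sum, Finset.sum_mul]
      rw [Finset.sum_comm]
      exact Finset.sum_congr rfl fun j _ => Finset.sum_congr rfl fun l _ => by ring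
    rw [this, hzx i i.isLt, hy]
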